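/- arXiv:2505.24647 — 2 statements merged into one kernel-verified Lean document; each statement's English description precedes it below -/
import Mathlib

section
/- Let μ be the Bernoulli-type measure on the zip shift space induced by a probability vector P_S = (p_0,...,p_{l-1}) on S and a probability vector P_Z = (p'_{a_1},...,p'_{a_m}) on Z, assigning to each cylinder the product of the symbol probabilities. Then μ is σ_τ-invariant if and only if p'_{a} = ∑_{s ∈ τ^{-1}(a)} p_s for every a ∈ Z. -/
open Function

/-- A point of the zip shift space `Σ`: coordinates `x_i ∈ S` for `i ≥ 0` are recorded in the
first component (`x.1 n` is the coordinate `n`), and coordinates `x_i ∈ Z` for `i < 0` are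
recorded in the second component (`x.2 n` is the coordinate `-(n+1)`). -/
abbrev ZipPt (S Z : Type*) := (ℕ → S) × (ℕ → Z)

/-- The zip shift map `σ_τ`: shift left, replacing the new coordinate `-1` by `τ(x_0)`. -/
def zipShift {S Z : Type*} (τ : S → Z) (x : ZipPt S Z) : ZipPt S Z :=
  (fun n => x.1 (n + 1), fun n => match n with
    | 0 => τ (x.1 0)
    | k + 1 => x.2 k)

namespace ZipAux

open MeasureTheory Finset ENNReal

variable {l m : ℕ}

/-- Cylinder set. -/
def cyl (E F : Finset ℕ) (u : ℕ → Fin l) (v : ℕ → Fin m) : Set (ZipPt (Fin l) (Fin m)) :=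
  {x | (∀ n ∈ E, x.1 n = u n) ∧ (∀ n ∈ F, x.2 n = v n)}

lemma measurableSet_cyl (E F : Finset ℕ) (u : ℕ → Fin l) (v : ℕ → Fin m) :
    MeasurableSet (cyl E F u v) := by
  have h1 : MeasurableSet {x : ZipPt (Fin l) (Fin m) | ∀ n ∈ E, x.1 n = u n} := by
    have : {x : ZipPt (Fin l) (Fin m) | ∀ n ∈ E, x.1 n = u n}
        = ⋂ n ∈ E, (fun x : ZipPt (Fin l) (Fin m) => x.1 n) ⁻¹' {u n} := by
      ext x; simp
    rw [this]
    exact MeasurableSet.biInter E.countable_toSet fun n _ =>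
      ((measurable_pi_apply n).comp measurable_fst) (measurableSet_singleton _)
  have h2 : MeasurableSet {x : ZipPt (Fin l) (Fin m) | ∀ n ∈ F, x.2 n = v n} := by
    have : {x : ZipPt (Fin l) (Fin m) | ∀ n ∈ F, x.2 n = v n}
        = ⋂ n ∈ F, (fun x : ZipPt (Fin l) (Fin m) => x.2 n) ⁻¹' {v n} := by
      ext x; simp
    rw [this]
    exact MeasurableSet.biInter F.countable_toSet fun n _ =>
      ((measurable_pi_apply n).comp measurable_snd) (measurableSet_singleton _)
  exact h1.inter h2

lemma measurable_zipShift (τ : Fin l → Fin m) : Measurable (zipShift τ) := by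
  refine Measurable.prod ?_ ?_
  · refine measurable_pi_iff.2 fun n => ?_
    show Measurable fun x : ZipPt (Fin l) (Fin m) => x.1 (n + 1)
    exact (measurable_pi_apply _).comp measurable_fst
  · refine measurable_pi_iff.2 fun n => ?_
    cases n with
    | zero =>
        show Measurable fun x : ZipPt (Fin l) (Fin m) => τ (x.1 0)
        exact (measurable_of_countable τ).comp ((measurable_pi_apply 0).comp measurable_fst)
    | succ k =>
        show Measurable fun x : ZipPt (Fin l) (Fin m) => x.2 k
        exact (measurable_pi_apply k).comp measurable_snd

/-- The collection of cylinder sets. -/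
def Ccyl : Set (Set (ZipPt (Fin l) (Fin m))) :=
  {s | ∃ E F u v, s = cyl E F u v}

lemma isPiSystem_Ccyl : IsPiSystem (Ccyl (l := l) (m := m)) := by
  rintro s ⟨E, F, u, v, rfl⟩ t ⟨E', F', u', v', rfl⟩ hne
  obtain ⟨x, hx⟩ := hne
  simp only [cyl, Set.mem_inter_iff, Set.mem_setOf_eq] at hx
  obtain ⟨⟨h1, h2⟩, h3, h4⟩ := hx
  refine ⟨E ∪ E', F ∪ F', x.1, x.2, ?_⟩
  ext y
  simp only [cyl, Set.mem_inter_iff, Set.mem_setOf_eq, Finset.mem_union]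
  constructor
  · rintro ⟨⟨a1, a2⟩, b1, b2⟩
    refine ⟨fun n hn => ?_, fun n hn => ?_⟩
    · rcases hn with hn | hn
      · rw [a1 n hn, h1 n hn]
      · rw [b1 n hn, h3 n hn]
    · rcases hn with hn | hn
      · rw [a2 n hn, h2 n hn]
      · rw [b2 n hn, h4 n hn]
  · rintro ⟨c1, c2⟩
    exact ⟨⟨fun n hn => (c1 n (Or.inl hn)).trans (h1 n hn),
            fun n hn => (c2 n (Or.inl hn)).trans (h2 n hn)⟩,
           fun n hn => (c1 n (Or.inr hn)).trans (h3 n hn),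
           fun n hn => (c2 n (Or.inr hn)).trans (h4 n hn)⟩

lemma generateFrom_Ccyl [Nonempty (Fin l)] [Nonempty (Fin m)] :
    (inferInstance : MeasurableSpace (ZipPt (Fin l) (Fin m)))
      = MeasurableSpace.generateFrom (Ccyl (l := l) (m := m)) := by
  refine le_antisymm ?_ ?_
  · rw [show (inferInstance : MeasurableSpace (ZipPt (Fin l) (Fin m)))
        = MeasurableSpace.comap Prod.fst MeasurableSpace.pi
          ⊔ MeasurableSpace.comap Prod.snd MeasurableSpace.pi from rfl]
    refine sup_le (measurable_iff_comap_le.mp ?_) (measurable_iff_comap_le.mp ?_)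
    · letI : MeasurableSpace (ZipPt (Fin l) (Fin m)) :=
        MeasurableSpace.generateFrom (Ccyl (l := l) (m := m))
      refine measurable_pi_iff.2 fun n => measurable_to_countable' fun s => ?_
      apply MeasurableSpace.measurableSet_generateFrom
      refine ⟨{n}, ∅, fun _ => s, fun _ => Classical.arbitrary _, ?_⟩
      ext x
      simp [cyl]
    · letI : MeasurableSpace (ZipPt (Fin l) (Fin m)) :=
        MeasurableSpace.generateFrom (Ccyl (l := l) (m := m))
      refine measurable_pi_iff.2 fun n => measurable_to_countable' fun a => ?_
      apply MeasurableSpace.measurableSet_generateFrom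
      refine ⟨∅, {n}, fun _ => Classical.arbitrary _, fun _ => a, ?_⟩
      ext x
      simp [cyl]
  · refine MeasurableSpace.generateFrom_le ?_
    rintro s ⟨E, F, u, v, rfl⟩
    exact measurableSet_cyl E F u v

/-- Extend `u` by the value `s` at coordinate `0`, shifting everything right. -/
def uExt (u : ℕ → Fin l) (s : Fin l) : ℕ → Fin l :=
  fun n => if n = 0 then s else u (n - 1)

@[simp] lemma uExt_zero (u : ℕ → Fin l) (s : Fin l) : uExt u s 0 = s := rfl

@[simp] lemma uExt_succ (u : ℕ → Fin l) (s : Fin l) (k : ℕ) : uExt u s (k + 1) = u k := by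
  simp [uExt]

lemma measure_preimage_cyl (τ : Fin l → Fin m)
    (p : Fin l → ℝ≥0∞) (p' : Fin m → ℝ≥0∞)
    (μ : Measure (ZipPt (Fin l) (Fin m)))
    (hcyl : ∀ (E F : Finset ℕ) (u : ℕ → Fin l) (v : ℕ → Fin m),
      μ (cyl E F u v) = (∏ n ∈ E, p (u n)) * (∏ n ∈ F, p' (v n)))
    (E F : Finset ℕ) (u : ℕ → Fin l) (v : ℕ → Fin m) :
    μ (zipShift τ ⁻¹' cyl E F u v) =
      if 0 ∈ F then
        (∏ n ∈ E, p (u n)) *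
          ((∑ s ∈ Finset.univ.filter (fun s => τ s = v 0), p s) * ∏ n ∈ F.erase 0, p' (v n))
      else (∏ n ∈ E, p (u n)) * ∏ n ∈ F, p' (v n) := by
  by_cases h0 : 0 ∈ F
  · rw [if_pos h0]
    have hset : zipShift τ ⁻¹' cyl E F u v =
        ⋃ s ∈ Finset.univ.filter (fun s => τ s = v 0),
          cyl (insert 0 (E.image (· + 1))) ((F.erase 0).image (· - 1))
            (uExt u s) (fun n => v (n + 1)) := by
      ext x
      simp only [cyl, Set.mem_preimage, Set.mem_setOf_eq, Set.mem_iUnion,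
        Finset.mem_filter, Finset.mem_univ, true_and, Finset.mem_insert,
        Finset.mem_image, Finset.mem_erase, exists_prop]
      constructor
      · rintro ⟨h1, h2⟩
        refine ⟨x.1 0, h2 0 h0, ?_, ?_⟩
        · rintro n (rfl | ⟨k, hk, rfl⟩)
          · rfl
          · rw [uExt_succ]
            exact h1 k hk
        · rintro n ⟨k, ⟨hk0, hk⟩, rfl⟩
          obtain ⟨j, rfl⟩ := Nat.exists_eq_succ_of_ne_zero hk0
          simp only [Nat.succ_sub_one]
          exact h2 (j + 1) hk
      · rintro ⟨s, hs, hA, hB⟩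
        have hx0 : x.1 0 = s := hA 0 (Or.inl rfl)
        refine ⟨fun n hn => ?_, fun n hn => ?_⟩
        · have := hA (n + 1) (Or.inr ⟨n, hn, rfl⟩)
          rw [uExt_succ] at this
          exact this
        · cases n with
          | zero =>
              show τ (x.1 0) = v 0
              rw [hx0]; exact hs
          | succ j =>
              have := hB j ⟨j + 1, ⟨j.succ_ne_zero, hn⟩, rfl⟩
              exact this
    rw [hset]
    have hdisj : (↑(Finset.univ.filter (fun s => τ s = v 0)) : Set (Fin l)).PairwiseDisjoint
        (fun s => cyl (insert 0 (E.image (· + 1))) ((F.erase 0).image (· - 1))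
          (uExt u s) (fun n => v (n + 1))) := by
      intro s _ s' _ hss
      refine Set.disjoint_left.2 fun x hx hx' => hss ?_
      have hxa : x ∈ cyl (insert 0 (E.image (· + 1))) ((F.erase 0).image (· - 1))
          (uExt u s) (fun n => v (n + 1)) := hx
      have hxb : x ∈ cyl (insert 0 (E.image (· + 1))) ((F.erase 0).image (· - 1))
          (uExt u s') (fun n => v (n + 1)) := hx'
      have h1 : x.1 0 = s := hxa.1 0 (Finset.mem_insert_self 0 _)
      have h2 : x.1 0 = s' := hxb.1 0 (Finset.mem_insert_self 0 _)
      rw [← h1, h2]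
    rw [measure_biUnion_finset hdisj fun s _ => measurableSet_cyl _ _ _ _]
    have hval : ∀ s ∈ Finset.univ.filter (fun s => τ s = v 0),
        μ (cyl (insert 0 (E.image (· + 1))) ((F.erase 0).image (· - 1))
            (uExt u s) (fun n => v (n + 1)))
          = p s * ((∏ n ∈ E, p (u n)) * ∏ n ∈ F.erase 0, p' (v n)) := by
      intro s _
      rw [hcyl]
      have h0im : (0 : ℕ) ∉ E.image (· + 1) := by simp
      rw [Finset.prod_insert h0im, uExt_zero]
      have e2 : ∏ n ∈ E.image (· + 1), p (uExt u s n) = ∏ n ∈ E, p (u n) := by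
        rw [Finset.prod_image (fun a _ b _ hab => by omega)]
        exact Finset.prod_congr rfl fun n _ => by rw [uExt_succ]
      have e3 : ∏ n ∈ (F.erase 0).image (· - 1), p' (v (n + 1)) = ∏ n ∈ F.erase 0, p' (v n) := by
        rw [Finset.prod_image (fun a ha b hb hab => by
          have ha0 : a ≠ 0 := (Finset.mem_erase.1 ha).1
          have hb0 : b ≠ 0 := (Finset.mem_erase.1 hb).1
          omega)]
        refine Finset.prod_congr rfl fun n hn => ?_
        have hn0 : n ≠ 0 := (Finset.mem_erase.1 hn).1
        have : n - 1 + 1 = n := by omega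
        rw [this]
      rw [e2, e3]
      ring
    rw [Finset.sum_congr rfl hval, ← Finset.sum_mul]
    ring
  · rw [if_neg h0]
    have hset : zipShift τ ⁻¹' cyl E F u v =
        cyl (E.image (· + 1)) (F.image (· - 1))
          (fun n => u (n - 1)) (fun n => v (n + 1)) := by
      ext x
      simp only [cyl, Set.mem_preimage, Set.mem_setOf_eq, Finset.mem_image]
      constructor
      · rintro ⟨h1, h2⟩
        refine ⟨?_, ?_⟩
        · rintro n ⟨k, hk, rfl⟩
          simp only [Nat.add_sub_cancel]
          exact h1 k hk
        · rintro n ⟨k, hk, rfl⟩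
          obtain ⟨j, rfl⟩ := Nat.exists_eq_succ_of_ne_zero (fun h => h0 (h ▸ hk))
          simp only [Nat.succ_sub_one]
          exact h2 (j + 1) hk
      · rintro ⟨h1, h2⟩
        refine ⟨fun n hn => ?_, fun n hn => ?_⟩
        · have := h1 (n + 1) ⟨n, hn, rfl⟩
          simp only [Nat.add_sub_cancel] at this
          exact this
        · obtain ⟨j, rfl⟩ := Nat.exists_eq_succ_of_ne_zero (fun h => h0 (h ▸ hn))
          have := h2 j ⟨j + 1, hn, rfl⟩
          exact this
    rw [hset, hcyl]
    congr 1
    · rw [Finset.prod_image (fun a _ b _ hab => by omega)]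
      exact Finset.prod_congr rfl fun n _ => by rw [Nat.add_sub_cancel]
    · rw [Finset.prod_image (fun a ha b hb hab => by
        have ha0 : a ≠ 0 := fun h => h0 (h ▸ ha)
        have hb0 : b ≠ 0 := fun h => h0 (h ▸ hb)
        omega)]
      refine Finset.prod_congr rfl fun n hn => ?_
      have hn0 : n ≠ 0 := fun h => h0 (h ▸ hn)
      have : n - 1 + 1 = n := by omega
      rw [this]

end ZipAux

open MeasureTheory Finset ENNReal in
/-- The Bernoulli-type product measure `μ` on the zip shift space (given on cylinders by the
product of symbol probabilities, `P_S` on nonnegative coordinates and `P_Z` on negative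
coordinates) is `σ_τ`-invariant iff `p'_a = ∑_{s ∈ τ⁻¹(a)} p_s` for every `a ∈ Z`. -/
theorem stmt8 {l m : ℕ} (τ : Fin l → Fin m) (hτ : Function.Surjective τ)
    (p : Fin l → ℝ≥0∞) (hp : ∑ s, p s = 1)
    (p' : Fin m → ℝ≥0∞) (hp' : ∑ a, p' a = 1)
    (μ : Measure (ZipPt (Fin l) (Fin m))) [IsProbabilityMeasure μ]
    (hcyl : ∀ (E F : Finset ℕ) (u : ℕ → Fin l) (v : ℕ → Fin m),
      μ {x : ZipPt (Fin l) (Fin m) |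
          (∀ n ∈ E, x.1 n = u n) ∧ (∀ n ∈ F, x.2 n = v n)} =
        (∏ n ∈ E, p (u n)) * (∏ n ∈ F, p' (v n))) :
    MeasurePreserving (zipShift τ) μ μ ↔
      ∀ a : Fin m, p' a = ∑ s ∈ Finset.univ.filter (fun s => τ s = a), p s := by
  haveI hL : Nonempty (Fin l) := by
    rcases Nat.eq_zero_or_pos l with rfl | hl
    · exact absurd hp (by simp)
    · exact ⟨⟨0, hl⟩⟩
  haveI hM : Nonempty (Fin m) := by
    rcases Nat.eq_zero_or_pos m with rfl | hm
    · exact absurd hp' (by simp)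
    · exact ⟨⟨0, hm⟩⟩
  have hcyl' : ∀ (E F : Finset ℕ) (u : ℕ → Fin l) (v : ℕ → Fin m),
      μ (ZipAux.cyl E F u v) = (∏ n ∈ E, p (u n)) * (∏ n ∈ F, p' (v n)) := hcyl
  constructor
  · intro h a
    have hpre := ZipAux.measure_preimage_cyl τ p p' μ hcyl' ∅ {0}
      (fun _ => Classical.arbitrary _) (fun _ => a)
    rw [if_pos (Finset.mem_singleton_self 0)] at hpre
    simp only [Finset.prod_empty, Finset.erase_singleton, one_mul, mul_one] at hpre
    have hB : μ (ZipAux.cyl (l := l) ∅ {0} (fun _ => Classical.arbitrary _) (fun _ => a))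
        = p' a := by
      rw [hcyl']; simp
    rw [h.measure_preimage (ZipAux.measurableSet_cyl _ _ _ _).nullMeasurableSet, hB] at hpre
    exact hpre
  · intro h
    have hmeas := ZipAux.measurable_zipShift (l := l) (m := m) τ
    refine ⟨hmeas, ?_⟩
    haveI : IsProbabilityMeasure (μ.map (zipShift τ)) :=
      Measure.isProbabilityMeasure_map hmeas.aemeasurable
    refine ext_of_generate_finite _ ZipAux.generateFrom_Ccyl ZipAux.isPiSystem_Ccyl ?_
      (by simp)
    rintro s ⟨E, F, u, v, rfl⟩
    rw [Measure.map_apply hmeas (ZipAux.measurableSet_cyl _ _ _ _)]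
    rw [ZipAux.measure_preimage_cyl τ p p' μ hcyl', hcyl']
    by_cases h0 : 0 ∈ F
    · rw [if_pos h0, ← h (v 0), Finset.mul_prod_erase F (fun n => p' (v n)) h0]
    · rw [if_neg h0]
end

section
/- The full zip shift map σ_τ with an invariant Bernoulli-type measure μ is strongly mixing: for all cylinder sets A, B, μ(σ_τ^{-n} A ∩ B) → μ(A) μ(B) as n → ∞. -/
open Function

section ZipAux
open MeasureTheory Finset ENNReal Filter

lemma zip_iter_fst {S Z : Type*} (τ : S → Z) (n : ℕ) (x : ZipPt S Z) (k : ℕ) :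
    ((zipShift τ)^[n] x).1 k = x.1 (k + n) := by
  induction n generalizing x k with
  | zero => rfl
  | succ n ih =>
    rw [Function.iterate_succ_apply, ih]
    show x.1 (k + n + 1) = x.1 (k + (n + 1))
    rw [Nat.add_assoc]

lemma zip_iter_snd_ge {S Z : Type*} (τ : S → Z) (n : ℕ) (x : ZipPt S Z) (k : ℕ)
    (h : n ≤ k) : ((zipShift τ)^[n] x).2 k = x.2 (k - n) := by
  induction n generalizing x k with
  | zero => rfl
  | succ n ih =>
    rw [Function.iterate_succ_apply, ih _ _ (le_trans (Nat.le_succ n) h)]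
    have hj : k - n = (k - (n + 1)) + 1 := by omega
    rw [hj]
    rfl

lemma zip_iter_snd_lt {S Z : Type*} (τ : S → Z) (n : ℕ) (x : ZipPt S Z) (k : ℕ)
    (h : k < n) : ((zipShift τ)^[n] x).2 k = τ (x.1 (n - 1 - k)) := by
  induction n generalizing x k with
  | zero => omega
  | succ n ih =>
    rw [Function.iterate_succ_apply]
    rcases Nat.lt_or_ge k n with hk | hk
    · rw [ih _ _ hk]
      show τ (x.1 (n - 1 - k + 1)) = τ (x.1 (n + 1 - 1 - k))
      have : n - 1 - k + 1 = n + 1 - 1 - k := by omega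
      rw [this]
    · have hk' : k = n := by omega
      subst hk'
      rw [zip_iter_snd_ge τ k _ k le_rfl, Nat.sub_self]
      show τ (x.1 0) = τ (x.1 (k + 1 - 1 - k))
      have : k + 1 - 1 - k = 0 := by omega
      rw [this]




lemma meas_cyl {l m : ℕ} (τ : Fin l → Fin m) (D G F : Finset ℕ)
    (u : ℕ → Fin l) (c v : ℕ → Fin m) :
    MeasurableSet {x : ZipPt (Fin l) (Fin m) |
      (∀ k ∈ D, x.1 k = u k) ∧ (∀ k ∈ G, τ (x.1 k) = c k) ∧ (∀ k ∈ F, x.2 k = v k)} := by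
  have h1 : ∀ k : ℕ, Measurable (fun x : ZipPt (Fin l) (Fin m) => x.1 k) :=
    fun k => (measurable_pi_apply k).comp measurable_fst
  have h2 : ∀ k : ℕ, Measurable (fun x : ZipPt (Fin l) (Fin m) => x.2 k) :=
    fun k => (measurable_pi_apply k).comp measurable_snd
  apply MeasurableSet.inter
  · show MeasurableSet {x : ZipPt (Fin l) (Fin m) | ∀ k ∈ D, x.1 k = u k}
    have : {x : ZipPt (Fin l) (Fin m) | ∀ k ∈ D, x.1 k = u k}
        = ⋂ k ∈ D, {x : ZipPt (Fin l) (Fin m) | x.1 k = u k} := by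
      ext x; simp
    rw [this]
    exact MeasurableSet.biInter D.countable_toSet fun k _ =>
      (h1 k) (measurableSet_singleton (u k))
  · apply MeasurableSet.inter
    · show MeasurableSet {x : ZipPt (Fin l) (Fin m) | ∀ k ∈ G, τ (x.1 k) = c k}
      have : {x : ZipPt (Fin l) (Fin m) | ∀ k ∈ G, τ (x.1 k) = c k}
          = ⋂ k ∈ G, {x : ZipPt (Fin l) (Fin m) | τ (x.1 k) = c k} := by
        ext x; simp
      rw [this]
      exact MeasurableSet.biInter G.countable_toSet fun k _ =>
        ((measurable_of_countable τ).comp (h1 k)) (measurableSet_singleton (c k))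
    · show MeasurableSet {x : ZipPt (Fin l) (Fin m) | ∀ k ∈ F, x.2 k = v k}
      have : {x : ZipPt (Fin l) (Fin m) | ∀ k ∈ F, x.2 k = v k}
          = ⋂ k ∈ F, {x : ZipPt (Fin l) (Fin m) | x.2 k = v k} := by
        ext x; simp
      rw [this]
      exact MeasurableSet.biInter F.countable_toSet fun k _ =>
        (h2 k) (measurableSet_singleton (v k))

lemma key {l m : ℕ} (τ : Fin l → Fin m)
    (p : Fin l → ℝ≥0∞) (p' : Fin m → ℝ≥0∞)
    (hcompat : ∀ a : Fin m, p' a = ∑ s ∈ Finset.univ.filter (fun s => τ s = a), p s)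
    (μ : Measure (ZipPt (Fin l) (Fin m)))
    (hcyl : ∀ (E F : Finset ℕ) (u : ℕ → Fin l) (v : ℕ → Fin m),
      μ {x : ZipPt (Fin l) (Fin m) |
          (∀ n ∈ E, x.1 n = u n) ∧ (∀ n ∈ F, x.2 n = v n)} =
        (∏ n ∈ E, p (u n)) * (∏ n ∈ F, p' (v n))) :
    ∀ (G D F : Finset ℕ), Disjoint D G → ∀ (u : ℕ → Fin l) (c v : ℕ → Fin m),
    μ {x : ZipPt (Fin l) (Fin m) |
        (∀ k ∈ D, x.1 k = u k) ∧ (∀ k ∈ G, τ (x.1 k) = c k) ∧ (∀ k ∈ F, x.2 k = v k)} =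
      (∏ k ∈ D, p (u k)) * (∏ k ∈ G, p' (c k)) * (∏ k ∈ F, p' (v k)) := by
  intro G
  induction G using Finset.induction_on with
  | empty =>
    intro D F _ u c v
    simp only [Finset.notMem_empty, false_implies, implies_true, true_and,
      Finset.prod_empty, mul_one]
    exact hcyl D F u v
  | @insert j G hj ih =>
    intro D F hDG u c v
    have hjD : j ∉ D := fun h => (Finset.disjoint_left.mp hDG h (Finset.mem_insert_self j G))
    have hDG' : Disjoint (insert j D) G := by
      rw [Finset.disjoint_insert_left]
      exact ⟨hj, Finset.disjoint_of_subset_right (Finset.subset_insert j G) hDG⟩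
    have hset : {x : ZipPt (Fin l) (Fin m) |
        (∀ k ∈ D, x.1 k = u k) ∧ (∀ k ∈ insert j G, τ (x.1 k) = c k) ∧ (∀ k ∈ F, x.2 k = v k)}
      = ⋃ s ∈ Finset.univ.filter (fun s => τ s = c j),
          {x : ZipPt (Fin l) (Fin m) |
            (∀ k ∈ insert j D, x.1 k = Function.update u j s k) ∧
            (∀ k ∈ G, τ (x.1 k) = c k) ∧ (∀ k ∈ F, x.2 k = v k)} := by
      ext x
      simp only [Set.mem_setOf_eq, Set.mem_iUnion, Finset.mem_filter, Finset.mem_univ,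
        true_and, Finset.mem_insert]
      constructor
      · rintro ⟨hD, hG, hF⟩
        refine ⟨x.1 j, hG j (Or.inl rfl), ?_, fun k hk => hG k (Or.inr hk), hF⟩
        rintro k (rfl | hk)
        · rw [Function.update_self]
        · have hne : k ≠ j := fun h => hjD (h ▸ hk)
          rw [Function.update_of_ne hne]
          exact hD k hk
      · rintro ⟨s, hs, hD, hG, hF⟩
        refine ⟨fun k hk => ?_, ?_, hF⟩
        · have hne : k ≠ j := fun h => hjD (h ▸ hk)
          have h3 := hD k (Or.inr hk)
          rwa [Function.update_of_ne hne] at h3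
        · rintro k (rfl | hk)
          · rw [hD k (Or.inl rfl), Function.update_self]; exact hs
          · exact hG k hk
    rw [hset, measure_biUnion_finset ?_ (fun s _ => meas_cyl τ (insert j D) G F _ c v)]
    · have hterm : ∀ s ∈ Finset.univ.filter (fun s => τ s = c j),
          μ {x : ZipPt (Fin l) (Fin m) |
            (∀ k ∈ insert j D, x.1 k = Function.update u j s k) ∧
            (∀ k ∈ G, τ (x.1 k) = c k) ∧ (∀ k ∈ F, x.2 k = v k)}
          = p s * ((∏ k ∈ D, p (u k)) * (∏ k ∈ G, p' (c k)) * (∏ k ∈ F, p' (v k))) := by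
        intro s _
        rw [ih (insert j D) F hDG' (Function.update u j s) c v,
          Finset.prod_insert hjD, Function.update_self]
        have heq : ∏ k ∈ D, p (Function.update u j s k) = ∏ k ∈ D, p (u k) :=
          Finset.prod_congr rfl fun k hk => by
            have hne : k ≠ j := fun h => hjD (h ▸ hk)
            rw [Function.update_of_ne hne]
        rw [heq]; ring
      rw [Finset.sum_congr rfl hterm, ← Finset.sum_mul, ← hcompat (c j),
        Finset.prod_insert hj]
      ring
    · intro s hs t ht hst
      refine Set.disjoint_left.mpr fun x hx hx' => hst ?_
      have h1 := hx.1 j (Finset.mem_insert_self j D)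
      have h2 := hx'.1 j (Finset.mem_insert_self j D)
      rw [Function.update_self] at h1 h2
      rw [← h1, ← h2]

end ZipAux

open MeasureTheory Finset ENNReal Filter in
/-- The full zip shift with an invariant Bernoulli-type measure is strongly mixing on
cylinder sets: `μ(σ_τ^{-n} A ∩ B) → μ(A) μ(B)` as `n → ∞` for all cylinders `A, B`. -/
theorem stmt18 {l m : ℕ} (τ : Fin l → Fin m) (hτ : Function.Surjective τ)
    (p : Fin l → ℝ≥0∞) (hp : ∑ s, p s = 1) (p' : Fin m → ℝ≥0∞)
    (hcompat : ∀ a : Fin m, p' a = ∑ s ∈ Finset.univ.filter (fun s => τ s = a), p s)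
    (μ : Measure (ZipPt (Fin l) (Fin m))) [IsProbabilityMeasure μ]
    (hcyl : ∀ (E F : Finset ℕ) (u : ℕ → Fin l) (v : ℕ → Fin m),
      μ {x : ZipPt (Fin l) (Fin m) |
          (∀ n ∈ E, x.1 n = u n) ∧ (∀ n ∈ F, x.2 n = v n)} =
        (∏ n ∈ E, p (u n)) * (∏ n ∈ F, p' (v n)))
    (E₁ F₁ E₂ F₂ : Finset ℕ) (u₁ u₂ : ℕ → Fin l) (v₁ v₂ : ℕ → Fin m) :
    Tendsto (fun n : ℕ =>
        μ (((zipShift τ)^[n] ⁻¹'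
            {x : ZipPt (Fin l) (Fin m) |
              (∀ k ∈ E₁, x.1 k = u₁ k) ∧ (∀ k ∈ F₁, x.2 k = v₁ k)}) ∩
          {x : ZipPt (Fin l) (Fin m) |
              (∀ k ∈ E₂, x.1 k = u₂ k) ∧ (∀ k ∈ F₂, x.2 k = v₂ k)}))
      atTop
      (nhds (μ {x : ZipPt (Fin l) (Fin m) |
              (∀ k ∈ E₁, x.1 k = u₁ k) ∧ (∀ k ∈ F₁, x.2 k = v₁ k)} *
             μ {x : ZipPt (Fin l) (Fin m) |
              (∀ k ∈ E₂, x.1 k = u₂ k) ∧ (∀ k ∈ F₂, x.2 k = v₂ k)})) := by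
  set sE := E₂.sup id with hsE
  set sF := F₁.sup id with hsF
  apply tendsto_atTop_of_eventually_const (i₀ := sE + sF + 2)
  intro n hn
  have hE₂ : ∀ k ∈ E₂, k ≤ sE := fun k hk => Finset.le_sup (f := id) hk
  have hF₁ : ∀ k ∈ F₁, k ≤ sF := fun k hk => Finset.le_sup (f := id) hk
  -- the data for the generalized cylinder
  set D : Finset ℕ := E₂ ∪ E₁.image (· + n) with hD
  set G : Finset ℕ := F₁.image (fun k => n - 1 - k) with hG
  set u' : ℕ → Fin l := fun k => if k ∈ E₂ then u₂ k else u₁ (k - n) with hu'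
  set c : ℕ → Fin m := fun j => v₁ (n - 1 - j) with hc
  -- set equality
  have hset : ((zipShift τ)^[n] ⁻¹'
        {x : ZipPt (Fin l) (Fin m) |
          (∀ k ∈ E₁, x.1 k = u₁ k) ∧ (∀ k ∈ F₁, x.2 k = v₁ k)}) ∩
      {x : ZipPt (Fin l) (Fin m) |
          (∀ k ∈ E₂, x.1 k = u₂ k) ∧ (∀ k ∈ F₂, x.2 k = v₂ k)}
      = {x : ZipPt (Fin l) (Fin m) |
          (∀ k ∈ D, x.1 k = u' k) ∧ (∀ k ∈ G, τ (x.1 k) = c k) ∧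
          (∀ k ∈ F₂, x.2 k = v₂ k)} := by
    ext x
    simp only [Set.mem_inter_iff, Set.mem_preimage, Set.mem_setOf_eq, hD, hG,
      Finset.mem_union, Finset.mem_image]
    constructor
    · rintro ⟨⟨hA1, hA2⟩, hB1, hB2⟩
      refine ⟨?_, ?_, hB2⟩
      · rintro k (hk | ⟨e, he, rfl⟩)
        · simp only [hu', if_pos hk]; exact hB1 k hk
        · have h1 : e + n ∉ E₂ := fun h => by have := hE₂ _ h; omega
          simp only [hu', if_neg h1, Nat.add_sub_cancel]
          have := hA1 e he
          rwa [zip_iter_fst] at this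
      · rintro k ⟨f, hf, rfl⟩
        have hflt : f < n := by have := hF₁ _ hf; omega
        have := hA2 f hf
        rw [zip_iter_snd_lt τ n x f hflt] at this
        simp only [hc]
        have h2 : n - 1 - (n - 1 - f) = f := by omega
        rw [h2]
        exact this
    · rintro ⟨hD', hG', hF'⟩
      refine ⟨⟨?_, ?_⟩, ?_, hF'⟩
      · intro k hk
        rw [zip_iter_fst]
        have h1 : k + n ∉ E₂ := fun h => by have := hE₂ _ h; omega
        have := hD' (k + n) (Or.inr ⟨k, hk, rfl⟩)
        simpa only [hu', if_neg h1, Nat.add_sub_cancel] using this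
      · intro k hk
        have hklt : k < n := by have := hF₁ _ hk; omega
        rw [zip_iter_snd_lt τ n x k hklt]
        have := hG' (n - 1 - k) ⟨k, hk, rfl⟩
        simp only [hc] at this
        have h2 : n - 1 - (n - 1 - k) = k := by omega
        rwa [h2] at this
      · intro k hk
        have := hD' k (Or.inl hk)
        simpa only [hu', if_pos hk] using this
  rw [hset]
  -- disjointness of D and G
  have hdisj : Disjoint D G := by
    rw [Finset.disjoint_left]
    rintro a ha haG
    simp only [hG, Finset.mem_image] at haG
    obtain ⟨f, hf, rfl⟩ := haG
    have hfle := hF₁ _ hf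
    simp only [hD, Finset.mem_union, Finset.mem_image] at ha
    rcases ha with h | ⟨e, he, heq⟩
    · have := hE₂ _ h; omega
    · omega
  rw [key τ p p' hcompat μ hcyl G D F₂ hdisj u' c v₂]
  -- compute the products
  have hDdisj : Disjoint E₂ (E₁.image (· + n)) := by
    rw [Finset.disjoint_left]
    intro a ha haI
    simp only [Finset.mem_image] at haI
    obtain ⟨e, he, rfl⟩ := haI
    have := hE₂ _ ha; omega
  have hprodD : ∏ k ∈ D, p (u' k) = (∏ k ∈ E₂, p (u₂ k)) * ∏ k ∈ E₁, p (u₁ k) := by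
    rw [hD, Finset.prod_union hDdisj]
    congr 1
    · exact Finset.prod_congr rfl fun k hk => by rw [hu']; simp only [if_pos hk]
    · rw [Finset.prod_image (fun a _ b _ h => by omega)]
      refine Finset.prod_congr rfl fun e he => ?_
      have h1 : e + n ∉ E₂ := fun h => by have := hE₂ _ h; omega
      rw [hu']; simp only [if_neg h1, Nat.add_sub_cancel]
  have hprodG : ∏ k ∈ G, p' (c k) = ∏ k ∈ F₁, p' (v₁ k) := by
    rw [hG, Finset.prod_image ?_]
    · refine Finset.prod_congr rfl fun f hf => ?_
      have h2 : n - 1 - (n - 1 - f) = f := by have := hF₁ _ hf; omega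
      rw [hc]; simp only [h2]
    · intro a ha b hb h
      have := hF₁ _ ha; have := hF₁ _ hb; simp only at h; omega
  rw [hprodD, hprodG, hcyl E₁ F₁ u₁ v₁, hcyl E₂ F₂ u₂ v₂]
  ring
end
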